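/- If d'(s,t) < d(s,t) and y ∈ P_v(t) (y is a predecessor of t with respect to source v in G), then d'(s,y) < d(s,y). -/

import Mathlib

open scoped BigOperators

/-- A directed graph on vertex set `V` with positive real edge weights. -/
structure WDigraph (V : Type*) where
  /-- the edge relation -/
  E : V → V → Prop
  /-- the edge weights -/
  w : V → V → ℝ
  /-- weights of edges are positive -/
  pos : ∀ a b, E a b → 0 < w a b

namespace WDigraph

variable {V : Type*} [Fintype V] [DecidableEq V]

/-- `p` is a simple path from `s` to `t` in `G`: a nonempty list of pairwise
distinct vertices starting at `s`, ending at `t`, consecutive vertices joined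
by edges. (Since all weights are positive, every shortest path is simple, so
it suffices to consider simple paths throughout.) -/
def IsPath (G : WDigraph V) (s t : V) (p : List V) : Prop :=
  List.Chain' G.E p ∧ p.head? = some s ∧ p.getLast? = some t ∧ p.Nodup

/-- The total weight of a list of vertices (sum of the weights of consecutive pairs). -/
def pw (G : WDigraph V) : List V → ℝ
  | [] => 0
  | [_] => 0
  | a :: b :: r => G.w a b + G.pw (b :: r)

/-- `d(s,t)`: shortest-path distance from `s` to `t`, equal to `⊤` (infinity)
if `t` is unreachable from `s`. -/
noncomputable def dist (G : WDigraph V) (s t : V) : EReal :=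
  sInf ((fun p => (G.pw p : EReal)) '' {p | G.IsPath s t p})

/-- The set of shortest `s`-`t` paths in `G`. -/
def SP (G : WDigraph V) (s t : V) : Set (List V) :=
  {p | G.IsPath s t p ∧ (G.pw p : EReal) = G.dist s t}

/-- `σ_{st}`: the number of shortest `s`-`t` paths in `G`. -/
noncomputable def sigma (G : WDigraph V) (s t : V) : ℕ :=
  (G.SP s t).ncard

/-- `σ_{st}(v)`: the number of shortest `s`-`t` paths in `G` that contain `v`. -/
noncomputable def sigmaV (G : WDigraph V) (s t v : V) : ℕ :=
  {p ∈ G.SP s t | v ∈ p}.ncard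

/-- `σ_{st}(v,w)`: the number of shortest `s`-`t` paths in `G` using the edge `(v,w)`. -/
noncomputable def sigmaE (G : WDigraph V) (s t v w : V) : ℕ :=
  {p ∈ G.SP s t | [v, w] <:+: p}.ncard

/-- `P_s(t)`: the set of predecessors of `t` with respect to source `s`:
nodes `y` with `(y,t) ∈ E` and `d(s,y) + ω(y,t) = d(s,t) < ∞`. -/
def pred (G : WDigraph V) (s t : V) : Set V :=
  {y | G.E y t ∧ G.dist s y + (G.w y t : EReal) = G.dist s t ∧ G.dist s t < ⊤}

/-- `δ_{s•}(v)`: Brandes's one-sided dependency of `s` on `v`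
(a summand is `0` whenever its denominator is `0`, which is automatic since
in Lean division by zero yields zero). -/
noncomputable def delta (G : WDigraph V) (s v : V) : ℝ :=
  ∑ᶠ t ∈ {t : V | t ≠ s ∧ t ≠ v}, (G.sigmaV s t v : ℝ) / (G.sigma s t : ℝ)

/-- `c_B(v)`: the betweenness centrality of `v`. -/
noncomputable def bc (G : WDigraph V) (v : V) : ℝ :=
  ∑ᶠ s ∈ {s : V | s ≠ v}, G.delta s v

/-- `G'` is obtained from `G` by the incremental update `(u, v, ω'(u,v))`:
either a new edge `(u,v) ∉ E` is inserted with positive weight, or the weight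
of the existing edge `(u,v)` is decreased; all other edges and weights are
unchanged. (Positivity of all weights is part of the `WDigraph` structure.) -/
structure IsUpdate (G G' : WDigraph V) (u v : V) : Prop where
  /-- the updated edge is present in `G'` -/
  edge' : G'.E u v
  /-- `E' = E ∪ {(u,v)}` -/
  edge_iff : ∀ a b, G'.E a b ↔ G.E a b ∨ a = u ∧ b = v
  /-- `ω'` agrees with `ω` on all edges other than `(u,v)` -/
  weight_eq : ∀ a b, ¬(a = u ∧ b = v) → G'.w a b = G.w a b
  /-- either an insertion of a new edge, or a weight decrease of an existing one -/
  insert_or_decrease : ¬ G.E u v ∨ (G.E u v ∧ G'.w u v < G.w u v)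

/-- `S(t)`: the affected sources of `t`. -/
def affS (G G' : WDigraph V) (t : V) : Set V :=
  {s | G.dist s t > G'.dist s t ∨ G.sigma s t ≠ G'.sigma s t}

/-- `T(s)`: the affected targets of `s`. -/
def affT (G G' : WDigraph V) (s : V) : Set V :=
  {t | G.dist s t > G'.dist s t ∨ G.sigma s t ≠ G'.sigma s t}

/-- `Δ_{s•}(v) = Σ_{t ∈ T(s), t ≠ v} σ_{st}(v)/σ_{st}`, computed in `G`
(`0`-convention for zero denominators). -/
noncomputable def Delta (G G' : WDigraph V) (s v : V) : ℝ :=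
  ∑ᶠ t ∈ {t : V | t ∈ affT G G' s ∧ t ≠ v}, (G.sigmaV s t v : ℝ) / (G.sigma s t : ℝ)

/-- `Δ'_{s•}(v) = Σ_{t ∈ T(s), t ≠ v} σ'_{st}(v)/σ'_{st}`, computed in `G'`
(`0`-convention for zero denominators). -/
noncomputable def Delta' (G G' : WDigraph V) (s v : V) : ℝ :=
  ∑ᶠ t ∈ {t : V | t ∈ affT G G' s ∧ t ≠ v}, (G'.sigmaV s t v : ℝ) / (G'.sigma s t : ℝ)

/-!
A shortest `s`–`t` path of `G'` that is shorter than every `s`–`t` path of `G` must use the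
updated edge, and then its two halves are paths of `G`: `d(s,u) + ω'(u,v) + d(v,t) ≤ d'(s,t)`.
If `y ∈ P_v(t)` then `d(v,t) = d(v,y) + ω(y,t)`, and with `d(s,t) ≤ d(s,y) + ω(y,t)` this gives
`d(s,u) + ω'(u,v) + d(v,y) < d(s,y)`; the left side bounds `d'(s,y)` through the edge `(u,v)`.
-/

section

omit [Fintype V] [DecidableEq V]

theorem _root_.List.exists_eq_append_cons_append_cons_of_not_nodup {α : Type*} {l : List α}
    (h : ¬ l.Nodup) : ∃ a x b c, l = a ++ x :: (b ++ x :: c) := by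
  induction l with
  | nil => simp at h
  | cons y l ih =>
    by_cases hy : y ∈ l
    · obtain ⟨b, c, rfl⟩ := List.append_of_mem hy
      exact ⟨[], y, b, c, rfl⟩
    · obtain ⟨a, x, b, c, rfl⟩ := ih fun hl => h (List.nodup_cons.mpr ⟨hy, hl⟩)
      exact ⟨y :: a, x, b, c, rfl⟩

lemma pw_append_cons (G : WDigraph V) (l₁ : List V) (x : V) (l₂ : List V) :
    G.pw (l₁ ++ x :: l₂) = G.pw (l₁ ++ [x]) + G.pw (x :: l₂) := by
  induction l₁ with
  | nil => simp [pw]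
  | cons a l ih =>
    cases l with
    | nil => simp [pw]
    | cons b l =>
      simp only [List.cons_append] at ih ⊢
      rw [pw, pw, ih, add_assoc]

lemma pw_nonneg (G : WDigraph V) : ∀ {p : List V}, p.IsChain G.E → 0 ≤ G.pw p
  | [], _ | [_], _ => le_rfl
  | a :: b :: r, hc => by
    rw [List.isChain_cons_cons] at hc
    rw [pw]
    exact add_nonneg (G.pos a b hc.1).le (G.pw_nonneg hc.2)

lemma dist_nonneg (G : WDigraph V) (s t : V) : 0 ≤ G.dist s t :=
  le_sInf <| by
    rintro _ ⟨p, hp, rfl⟩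
    exact EReal.coe_nonneg.mpr (G.pw_nonneg hp.1)

lemma dist_ne_bot (G : WDigraph V) (s t : V) : G.dist s t ≠ ⊥ :=
  ne_bot_of_le_ne_bot EReal.zero_ne_bot (G.dist_nonneg s t)

/-- Loop erasure: cutting out the closed walk between two visits of a vertex does not increase
the weight, since weights are nonnegative. -/
lemma dist_le_pw (G : WDigraph V) {s t : V} {p : List V} (hc : p.IsChain G.E)
    (hs : p.head? = some s) (ht : p.getLast? = some t) : G.dist s t ≤ G.pw p := by
  induction hn : p.length using Nat.strong_induction_on generalizing p with
  | _ n ih =>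
  by_cases hnd : p.Nodup
  · exact sInf_le ⟨p, ⟨hc, hs, ht, hnd⟩, rfl⟩
  obtain ⟨a, x, b, c, rfl⟩ := List.exists_eq_append_cons_append_cons_of_not_nodup hnd
  obtain ⟨hca, hcx⟩ := List.isChain_split.mp hc
  obtain ⟨hloop, hcc⟩ := (List.isChain_split (l₁ := x :: b)).mp hcx
  have hpw : G.pw (a ++ x :: (b ++ x :: c)) = G.pw (a ++ x :: c) + G.pw (x :: b ++ [x]) := by
    rw [pw_append_cons, pw_append_cons G a x c, ← List.cons_append, pw_append_cons G (x :: b)]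
    ring
  calc G.dist s t ≤ G.pw (a ++ x :: c) :=
        ih _ (by simp at hn ⊢; omega) (List.isChain_split.mpr ⟨hca, hcc⟩)
          (by simpa using hs) (by
            rw [List.getLast?_append_cons] at ht ⊢
            rwa [← List.cons_append, List.getLast?_append_cons] at ht) rfl
    _ ≤ G.pw (a ++ x :: (b ++ x :: c)) := by
        rw [hpw]
        exact_mod_cast le_add_of_nonneg_right (G.pw_nonneg hloop)

lemma dist_le_w (G : WDigraph V) {a b : V} (hab : G.E a b) : G.dist a b ≤ G.w a b :=
  (G.dist_le_pw (List.isChain_pair.mpr hab) rfl rfl).trans_eq (by simp [pw])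

lemma SP_nonempty [Fintype V] (G : WDigraph V) {s t : V} (h : G.dist s t < ⊤) :
    (G.SP s t).Nonempty := by
  have hfin : {p | G.IsPath s t p}.Finite :=
    (List.finite_length_le V (Fintype.card V)).subset fun p hp => hp.2.2.2.length_le_card
  have hne : ((fun p => (G.pw p : EReal)) '' {p | G.IsPath s t p}).Nonempty :=
    Set.nonempty_iff_ne_empty.mpr fun he => h.ne (by rw [dist, he, sInf_empty])
  obtain ⟨p, hp, hpw⟩ := hne.csInf_mem (hfin.image _)
  exact ⟨p, hp, hpw⟩

lemma dist_triangle [Fintype V] (G : WDigraph V) (s m t : V) :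
    G.dist s t ≤ G.dist s m + G.dist m t := by
  rcases eq_top_or_lt_top (G.dist s m) with h₁ | h₁
  · simp [h₁, EReal.top_add_of_ne_bot (G.dist_ne_bot m t)]
  rcases eq_top_or_lt_top (G.dist m t) with h₂ | h₂
  · simp [h₂, EReal.add_top_of_ne_bot (G.dist_ne_bot s m)]
  obtain ⟨p, ⟨hp, hps, hpm, -⟩, hpw⟩ := G.SP_nonempty h₁
  obtain ⟨q, ⟨hq, hqm, hqt, -⟩, hqw⟩ := G.SP_nonempty h₂
  obtain ⟨p, rfl⟩ := List.getLast?_eq_some_iff.mp hpm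
  obtain ⟨q, rfl⟩ := List.head?_eq_some_iff.mp hqm
  rw [← hpw, ← hqw, ← EReal.coe_add, ← pw_append_cons]
  exact G.dist_le_pw (List.isChain_split.mpr ⟨hp, hq⟩) (by simpa using hps) (by simpa using hqt)

namespace IsUpdate

variable {G G' : WDigraph V} {u v : V}

lemma w_le (h : IsUpdate G G' u v) {a b : V} (hab : G.E a b) : G'.w a b ≤ G.w a b := by
  by_cases huv : a = u ∧ b = v
  · obtain ⟨rfl, rfl⟩ := huv
    exact (h.insert_or_decrease.resolve_left (not_not.mpr hab)).2.le
  · exact (h.weight_eq a b huv).le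

lemma pw_le (h : IsUpdate G G' u v) : ∀ {p : List V}, p.IsChain G.E → G'.pw p ≤ G.pw p
  | [], _ | [_], _ => le_rfl
  | a :: b :: r, hc => by
    rw [List.isChain_cons_cons] at hc
    simp only [pw]
    exact add_le_add (h.w_le hc.1) (h.pw_le hc.2)

lemma dist_le (h : IsUpdate G G' u v) (a b : V) : G'.dist a b ≤ G.dist a b :=
  le_sInf <| by
    rintro _ ⟨p, ⟨hc, hs, ht, -⟩, rfl⟩
    have hc : p.IsChain G.E := hc
    exact (G'.dist_le_pw (hc.imp fun x y hxy => (h.edge_iff x y).mpr (Or.inl hxy)) hs ht).trans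
      (EReal.coe_le_coe_iff.mpr (h.pw_le hc))

lemma isChain_and_pw_eq_of_not_infix (h : IsUpdate G G' u v) :
    ∀ {p : List V}, p.IsChain G'.E → ¬ [u, v] <:+: p → p.IsChain G.E ∧ G.pw p = G'.pw p
  | [], _, _ => ⟨List.isChain_nil, rfl⟩
  | [_], _, _ => ⟨List.isChain_singleton _, rfl⟩
  | a :: b :: r, hc, huv => by
    rw [List.isChain_cons_cons] at hc
    have hab : ¬ (a = u ∧ b = v) := by
      rintro ⟨rfl, rfl⟩
      exact huv (List.prefix_append [a, b] r).isInfix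
    obtain ⟨hcr, hpw⟩ :=
      h.isChain_and_pw_eq_of_not_infix hc.2 fun hi => huv (hi.trans (List.suffix_cons a _).isInfix)
    refine ⟨List.isChain_cons_cons.mpr ⟨((h.edge_iff a b).mp hc.1).resolve_right hab, hcr⟩, ?_⟩
    simp only [pw, hpw, h.weight_eq a b hab]

/-- A simple path passes through the updated edge at most once, so both halves are paths of `G`. -/
lemma dist_add_w_add_dist_le_pw (h : IsUpdate G G' u v) {s t : V} {p : List V}
    (hp : G'.IsPath s t p) (huv : [u, v] <:+: p) :
    G.dist s u + G'.w u v + G.dist v t ≤ G'.pw p := by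
  obtain ⟨hc, hs, ht, hnd⟩ := hp
  obtain ⟨l₁, l₂, rfl⟩ := huv
  have hsplit : l₁ ++ [u, v] ++ l₂ = (l₁ ++ [u]) ++ v :: l₂ := by simp
  have hpw : G'.pw (l₁ ++ [u, v] ++ l₂) = G'.pw (l₁ ++ [u]) + G'.w u v + G'.pw (v :: l₂) := by
    rw [List.append_assoc, List.cons_append, List.singleton_append, pw_append_cons, pw, add_assoc]
  rw [hsplit] at hc hs ht hnd
  have hc : ((l₁ ++ [u]) ++ v :: l₂).IsChain G'.E := hc
  obtain ⟨hc₁, hc₂, -⟩ := List.isChain_append.mp hc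
  have hdisj := (List.nodup_append.mp hnd).2.2
  obtain ⟨hc₁, hpw₁⟩ := h.isChain_and_pw_eq_of_not_infix hc₁
    fun hi => hdisj v (hi.subset (by simp)) v (by simp) rfl
  obtain ⟨hc₂, hpw₂⟩ := h.isChain_and_pw_eq_of_not_infix hc₂
    fun hi => hdisj u (by simp) u (hi.subset (by simp)) rfl
  have hd₁ : G.dist s u ≤ G'.pw (l₁ ++ [u]) :=
    hpw₁ ▸ G.dist_le_pw hc₁ (by simpa using hs) (by simp)
  have hd₂ : G.dist v t ≤ G'.pw (v :: l₂) := hpw₂ ▸ G.dist_le_pw hc₂ rfl (by simpa using ht)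
  rw [hpw, EReal.coe_add, EReal.coe_add]
  gcongr

lemma dist_add_w_add_dist_le_of_dist_lt [Fintype V] (h : IsUpdate G G' u v) {s t : V}
    (hst : G'.dist s t < G.dist s t) : G.dist s u + G'.w u v + G.dist v t ≤ G'.dist s t := by
  obtain ⟨p, hp, hpw⟩ := G'.SP_nonempty (hst.trans_le le_top)
  by_cases huv : [u, v] <:+: p
  · exact hpw ▸ h.dist_add_w_add_dist_le_pw hp huv
  · obtain ⟨hc, hpw'⟩ := h.isChain_and_pw_eq_of_not_infix hp.1 huv
    have hle : G.dist s t ≤ G'.dist s t := hpw ▸ hpw' ▸ sInf_le ⟨p, ⟨hc, hp.2⟩, rfl⟩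
    exact absurd hst hle.not_gt

end IsUpdate

end

/-- If `d'(s,t) < d(s,t)` and `y ∈ P_v(t)` (a predecessor of `t` with
respect to source `v` in `G`), then `d'(s,y) < d(s,y)`. -/
theorem dist'_lt_dist_of_pred (G G' : WDigraph V) (u v : V)
    (h : IsUpdate G G' u v) (s t y : V)
    (hst : G'.dist s t < G.dist s t) (hy : y ∈ G.pred v t) :
    G'.dist s y < G.dist s y := by
  obtain ⟨hyt, hvt, -⟩ := hy
  have hvia : G'.dist s y ≤ G.dist s u + G'.w u v + G.dist v y :=
    calc G'.dist s y ≤ G'.dist s u + G'.dist u v + G'.dist v y :=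
          (G'.dist_triangle s v y).trans (add_le_add (G'.dist_triangle s u v) le_rfl)
      _ ≤ G.dist s u + G'.w u v + G.dist v y :=
          add_le_add (add_le_add (h.dist_le s u) (G'.dist_le_w h.edge')) (h.dist_le v y)
  have hthrough : G.dist s u + G'.w u v + G.dist v y + G.w y t < G.dist s y + G.w y t :=
    calc _ = G.dist s u + G'.w u v + G.dist v t := by rw [add_assoc _ (G.dist v y), hvt]
      _ ≤ G'.dist s t := h.dist_add_w_add_dist_le_of_dist_lt hst
      _ < G.dist s t := hst
      _ ≤ G.dist s y + G.w y t :=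
          (G.dist_triangle s y t).trans (add_le_add le_rfl (G.dist_le_w hyt))
  exact hvia.trans_lt (lt_of_not_ge fun hle => hthrough.not_ge (add_le_add hle le_rfl))

end WDigraph
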